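/- Let H be a complex Hilbert space and L a bounded, non-negative, self-adjoint operator on H. Let α, μ be real numbers with 0 ≤ α ≤ 1, 0 ≤ μ < 1 and α + μ ≤ 1, and set δ = 1 - α - μ. Then for every t > 0, ‖∫₀ᵗ s^{-μ} L^α e^{-(t-s)L} ds‖ ≤ t^δ (1-μ)^{α-1}, where ‖·‖ is the operator norm of the Bochner integral of the operator-valued function s ↦ s^{-μ} L^α e^{-(t-s)L}. -/

import Mathlib

/-!
The continuous functional calculus turns the operator integral into `cfc F L` with
`F x = x ^ α * ∫₀ᵗ s ^ (-μ) e^{-(t-s)x} ds`, so it suffices to bound `F` on `σ(L) ⊆ [0, ∞)`.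
For `x ≤ (1 - μ) / t` drop the exponential: `F x ≤ x ^ α t ^ (1 - μ) / (1 - μ)`.
For larger `x` split the integral at `s₀ = (1 - μ) / x`, freezing the exponential at `s₀` on
`[0, s₀]` and `s ^ (-μ)` at `s₀` on `[s₀, t]`; this choice of `s₀` makes the two pieces sum to
`(1 - μ) ^ (-μ) x ^ (α + μ - 1)`. Since `α ≥ 0 ≥ α + μ - 1`, the first bound increases and the
second decreases in `x`, and both equal `t ^ δ (1 - μ) ^ (α - 1)` at `x = (1 - μ) / t`.
-/

open MeasureTheory

/-- `L^α e^{-rL}`, defined by the continuous functional calculus of the self-adjoint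
operator `L` applied to `λ ↦ λ^α e^{-rλ}`. -/
noncomputable def opPow {H : Type*} [NormedAddCommGroup H] [InnerProductSpace ℂ H]
    [CompleteSpace H] (L : H →L[ℂ] H) (α r : ℝ) : H →L[ℂ] H :=
  cfc (fun lam : ℝ => lam ^ α * Real.exp (-r * lam)) L

open Set Real intervalIntegral

section

variable {X 𝕜 A : Type*} {p : A → Prop} [RCLike 𝕜] [TopologicalSpace X] [MeasurableSpace X]
  [OpensMeasurableSpace X] {ν : Measure X}
  [NormedRing A] [StarRing A] [NormedAlgebra 𝕜 A] [NormedSpace ℝ A]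
  [ContinuousFunctionalCalculus 𝕜 A p] [CompleteSpace A]

lemma setIntegral_smul_cfc {S : Set X} (hS : MeasurableSet S) {a : A}
    [SecondCountableTopologyEither X C(spectrum 𝕜 a, 𝕜)]
    {w : X → 𝕜} (hw : IntegrableOn w S ν) (hwc : ContinuousOn w S)
    {f : X → 𝕜 → 𝕜} (hf : ContinuousOn (Function.uncurry f) (S ×ˢ spectrum 𝕜 a)) {C : ℝ}
    (hfC : ∀ s ∈ S, ∀ x ∈ spectrum 𝕜 a, ‖f s x‖ ≤ C) (ha : p a) :
    ∫ s in S, w s • cfc (f s) a ∂ν = cfc (fun x => ∫ s in S, w s * f s x ∂ν) a := by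
  have hfs : ∀ s ∈ S, ContinuousOn (f s) (spectrum 𝕜 a) := fun s hs =>
    hf.comp (Continuous.prodMk_right s).continuousOn fun _ hx => ⟨hs, hx⟩
  rw [cfc_setIntegral hS (fun s x => w s * f s x) (fun s => ‖w s‖ * C) a ?_ ?_
    (hw.norm.mul_const C).hasFiniteIntegral ha]
  · refine setIntegral_congr_fun hS fun s hs => ?_
    exact (cfc_const_mul (w s) (f s) a (hfs s hs)).symm
  · exact (hwc.comp continuousOn_fst fun _ h => h.1).mul hf
  · filter_upwards [ae_restrict_mem hS] with s hs x hx
    rw [norm_mul]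
    exact mul_le_mul_of_nonneg_left (hfC s hs x hx) (norm_nonneg _)

end

lemma integral_rpow_neg {μ : ℝ} (hμ : μ < 1) (a : ℝ) :
    ∫ s in (0 : ℝ)..a, s ^ (-μ) = a ^ (1 - μ) / (1 - μ) := by
  rw [integral_rpow (Or.inl (by linarith)), zero_rpow (by linarith), neg_add_eq_sub, sub_zero]

lemma integral_exp_neg_sub_mul {x : ℝ} (hx : 0 < x) (t a b : ℝ) :
    ∫ s in a..b, exp (-(t - s) * x) = (exp (-(t - b) * x) - exp (-(t - a) * x)) / x := by
  have hderiv : ∀ s, HasDerivAt (fun u => exp (-(t - u) * x) / x) (exp (-(t - s) * x)) s := by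
    intro s
    have hlin : HasDerivAt (fun u => -(t - u) * x) x s := by
      simpa using ((hasDerivAt_id s).const_sub t).neg.mul_const x
    simpa [mul_div_assoc, div_self hx.ne'] using hlin.exp.div_const x
  rw [integral_eq_sub_of_hasDerivAt (fun s _ => hderiv s)
    ((by fun_prop : Continuous fun s => exp (-(t - s) * x)).intervalIntegrable a b), sub_div]

lemma exp_neg_sub_mul_le_one {t s x : ℝ} (hs : s ≤ t) (hx : 0 ≤ x) : exp (-(t - s) * x) ≤ 1 := by
  rw [exp_le_one_iff, neg_mul]
  exact neg_nonpos.2 (mul_nonneg (sub_nonneg.2 hs) hx)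

section

variable {μ t x : ℝ}

lemma intervalIntegrable_rpow_neg_mul_exp (hμ : μ < 1) (a b : ℝ) :
    IntervalIntegrable (fun s => s ^ (-μ) * exp (-(t - s) * x)) volume a b :=
  (intervalIntegrable_rpow' (by linarith)).mul_continuousOn (by fun_prop)

lemma integral_rpow_neg_mul_exp_le (hμ : μ < 1) (ht : 0 ≤ t) (hx : 0 ≤ x) :
    ∫ s in (0 : ℝ)..t, s ^ (-μ) * exp (-(t - s) * x) ≤ t ^ (1 - μ) / (1 - μ) := by
  rw [← integral_rpow_neg hμ t]
  refine integral_mono_on ht (intervalIntegrable_rpow_neg_mul_exp hμ 0 t)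
    (intervalIntegrable_rpow' (by linarith)) fun s hs => ?_
  exact mul_le_of_le_one_right (rpow_nonneg hs.1 _) (exp_neg_sub_mul_le_one hs.2 hx)

lemma integral_rpow_neg_mul_exp_le_split (hμ0 : 0 ≤ μ) (hμ1 : μ < 1) (hx : 0 < x) {s₀ : ℝ}
    (hs₀ : 0 < s₀) (hs₀t : s₀ ≤ t) :
    ∫ s in (0 : ℝ)..t, s ^ (-μ) * exp (-(t - s) * x) ≤
      exp (-(t - s₀) * x) * (s₀ ^ (1 - μ) / (1 - μ)) +
        s₀ ^ (-μ) * ((1 - exp (-(t - s₀) * x)) / x) := by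
  rw [← integral_add_adjacent_intervals (intervalIntegrable_rpow_neg_mul_exp hμ1 0 s₀)
    (intervalIntegrable_rpow_neg_mul_exp hμ1 s₀ t)]
  gcongr
  · rw [← integral_rpow_neg hμ1, ← intervalIntegral.integral_const_mul]
    refine integral_mono_on hs₀.le (intervalIntegrable_rpow_neg_mul_exp hμ1 0 s₀)
      ((intervalIntegrable_rpow' (by linarith)).const_mul _) fun s hs => ?_
    rw [mul_comm]
    gcongr
    exacts [rpow_nonneg hs.1 _, hs.2]
  · have hexp := integral_exp_neg_sub_mul hx t s₀ t
    rw [sub_self, neg_zero, zero_mul, exp_zero] at hexp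
    rw [← hexp, ← intervalIntegral.integral_const_mul]
    refine integral_mono_on hs₀t (intervalIntegrable_rpow_neg_mul_exp hμ1 s₀ t)
      (((by fun_prop : Continuous fun s => exp (-(t - s) * x)).intervalIntegrable _ _).const_mul
        _) fun s hs => ?_
    exact mul_le_mul_of_nonneg_right (rpow_le_rpow_of_nonpos hs₀ hs.1 (by linarith)) (exp_pos _).le

lemma integral_rpow_neg_mul_exp_nonneg (ht : 0 ≤ t) :
    0 ≤ ∫ s in (0 : ℝ)..t, s ^ (-μ) * exp (-(t - s) * x) :=
  integral_nonneg ht fun _ hs => mul_nonneg (rpow_nonneg hs.1 _) (exp_pos _).le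

lemma integral_rpow_neg_mul_exp_le_rpow (hμ0 : 0 ≤ μ) (hμ1 : μ < 1) (hx : 0 < x)
    (htx : 1 - μ ≤ t * x) :
    ∫ s in (0 : ℝ)..t, s ^ (-μ) * exp (-(t - s) * x) ≤ (1 - μ) ^ (-μ) * x ^ (μ - 1) := by
  have hμ : 0 < 1 - μ := by linarith
  set s₀ := (1 - μ) / x
  have hs₀ : 0 < s₀ := div_pos hμ hx
  refine (integral_rpow_neg_mul_exp_le_split hμ0 hμ1 hx hs₀
    ((div_le_iff₀ hx).2 htx)).trans_eq ?_
  have hpiece : s₀ ^ (1 - μ) / (1 - μ) = s₀ ^ (-μ) / x := by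
    rw [sub_eq_neg_add, rpow_add_one hs₀.ne']
    field_simp
    rw [show s₀ * x = 1 - μ from div_mul_cancel₀ _ hx.ne', neg_add_eq_sub, div_self hμ.ne']
  have hvalue : s₀ ^ (-μ) / x = (1 - μ) ^ (-μ) * x ^ (μ - 1) := by
    rw [div_rpow hμ.le hx.le, rpow_neg hx.le, rpow_sub_one hx.ne']
    field_simp
  rw [hpiece, ← hvalue]
  ring

lemma rpow_mul_integral_rpow_neg_mul_exp_le {α : ℝ} (hα0 : 0 ≤ α) (hμ0 : 0 ≤ μ) (hμ1 : μ < 1)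
    (hαμ : α + μ ≤ 1) (ht : 0 < t) (hx : 0 ≤ x) :
    x ^ α * ∫ s in (0 : ℝ)..t, s ^ (-μ) * exp (-(t - s) * x) ≤
      t ^ (1 - α - μ) * (1 - μ) ^ (α - 1) := by
  have hμ : 0 < 1 - μ := by linarith
  have hc : ∀ β : ℝ, ((1 - μ) / t) ^ β = (1 - μ) ^ β * t ^ (-β) := fun β => by
    rw [div_rpow hμ.le ht.le, rpow_neg ht.le, div_eq_mul_inv]
  rcases le_total x ((1 - μ) / t) with hxc | hcx
  · calc x ^ α * ∫ s in (0 : ℝ)..t, s ^ (-μ) * exp (-(t - s) * x)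
        ≤ ((1 - μ) / t) ^ α * (t ^ (1 - μ) / (1 - μ)) :=
          mul_le_mul (rpow_le_rpow hx hxc hα0) (integral_rpow_neg_mul_exp_le hμ1 ht.le hx)
            (integral_rpow_neg_mul_exp_nonneg ht.le) (by positivity)
      _ = (1 - μ) ^ (α + -1) * t ^ (-α + (1 - μ)) := by
          rw [hc, rpow_add hμ, rpow_add ht, rpow_neg_one]
          ring
      _ = t ^ (1 - α - μ) * (1 - μ) ^ (α - 1) := by ring_nf
  · have hx' : 0 < x := (div_pos hμ ht).trans_le hcx
    calc x ^ α * ∫ s in (0 : ℝ)..t, s ^ (-μ) * exp (-(t - s) * x)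
        ≤ x ^ α * ((1 - μ) ^ (-μ) * x ^ (μ - 1)) := by
          gcongr
          exact integral_rpow_neg_mul_exp_le_rpow hμ0 hμ1 hx' ((div_le_iff₀' ht).1 hcx)
      _ = (1 - μ) ^ (-μ) * x ^ (α + μ - 1) := by
          rw [add_sub_assoc, rpow_add hx']
          ring
      _ ≤ (1 - μ) ^ (-μ) * ((1 - μ) / t) ^ (α + μ - 1) :=
          mul_le_mul_of_nonneg_left (rpow_le_rpow_of_nonpos (div_pos hμ ht) hcx (by linarith))
            (by positivity)
      _ = t ^ (1 - α - μ) * (1 - μ) ^ (α - 1) := by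
          rw [hc, ← mul_assoc, ← rpow_add hμ]
          ring_nf

end


lemma setIntegral_rpow_neg_smul_opPow {H : Type*} [NormedAddCommGroup H] [InnerProductSpace ℂ H]
    [CompleteSpace H] {L : H →L[ℂ] H} (hL : 0 ≤ L) {α μ t : ℝ} (hα0 : 0 ≤ α) (hμ1 : μ < 1)
    (ht : 0 ≤ t) :
    ∫ s in Ioo 0 t, s ^ (-μ) • opPow L α (t - s) =
      cfc (fun x => x ^ α * ∫ s in (0 : ℝ)..t, s ^ (-μ) * exp (-(t - s) * x)) L := by
  have hw : IntegrableOn (fun s : ℝ => s ^ (-μ)) (Ioo 0 t) :=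
    ((intervalIntegrable_iff_integrableOn_Ioc_of_le ht).1
      (intervalIntegrable_rpow' (by linarith))).mono_set Ioo_subset_Ioc_self
  have hwc : ContinuousOn (fun s : ℝ => s ^ (-μ)) (Ioo 0 t) :=
    continuousOn_id.rpow_const fun s hs => Or.inl hs.1.ne'
  have hf : Continuous (Function.uncurry fun s x : ℝ => x ^ α * exp (-(t - s) * x)) :=
    ((continuous_rpow_const hα0).comp continuous_snd).mul (by fun_prop)
  obtain ⟨M, hM⟩ := (spectrum.isCompact (𝕜 := ℝ) L).bddAbove
  have hfC : ∀ s ∈ Ioo 0 t, ∀ x ∈ spectrum ℝ L, ‖x ^ α * exp (-(t - s) * x)‖ ≤ M ^ α := by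
    intro s hs x hx
    have hx0 : 0 ≤ x := spectrum_nonneg_of_nonneg hL hx
    rw [norm_of_nonneg (by positivity)]
    exact (mul_le_of_le_one_right (rpow_nonneg hx0 _) (exp_neg_sub_mul_le_one hs.2.le hx0)).trans
      (rpow_le_rpow hx0 (hM hx) hα0)
  rw [show ∫ s in Ioo 0 t, s ^ (-μ) • opPow L α (t - s) = _ from
    setIntegral_smul_cfc measurableSet_Ioo hw hwc hf.continuousOn hfC hL.isSelfAdjoint]
  congr! 2 with x
  rw [integral_of_le ht, integral_Ioc_eq_integral_Ioo, ← MeasureTheory.integral_const_mul]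
  simp_rw [mul_left_comm]

theorem operator_integral_estimate_lemma512_general
    {H : Type*} [NormedAddCommGroup H] [InnerProductSpace ℂ H] [CompleteSpace H]
    (L : H →L[ℂ] H) (hLsa : IsSelfAdjoint L) (hLpos : ∀ x : H, 0 ≤ (inner ℂ (L x) x : ℂ).re)
    (α μ δ : ℝ) (hα0 : 0 ≤ α) (hμ0 : 0 ≤ μ) (hμ1 : μ < 1) (hαμ : α + μ ≤ 1)
    (hδ : δ = 1 - α - μ) (t : ℝ) (ht : 0 < t) :
    ‖∫ s in Set.Ioo (0:ℝ) t, s ^ (-μ) • opPow L α (t - s)‖ ≤ t ^ δ * (1 - μ) ^ (α - 1) := by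
  have hL : 0 ≤ L :=
    (L.nonneg_iff_isPositive).2 (ContinuousLinearMap.isPositive_def'.2 ⟨hLsa, hLpos⟩)
  rw [setIntegral_rpow_neg_smul_opPow hL hα0 hμ1 ht.le, hδ]
  refine norm_cfc_le (mul_nonneg (rpow_nonneg ht.le _) (rpow_nonneg (by linarith) _))
    fun x hx => ?_
  have hx0 : 0 ≤ x := spectrum_nonneg_of_nonneg hL hx
  rw [norm_of_nonneg (mul_nonneg (rpow_nonneg hx0 _) (integral_rpow_neg_mul_exp_nonneg ht.le))]
  exact rpow_mul_integral_rpow_neg_mul_exp_le hα0 hμ0 hμ1 hαμ ht hx0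

/-- Lemma 5.12: for a bounded non-negative self-adjoint operator `L` on a complex
Hilbert space, `0 ≤ α ≤ 1`, `0 ≤ μ < 1`, `α + μ ≤ 1`, `δ = 1 - α - μ` and `t > 0`,
`‖∫₀ᵗ s^{-μ} L^α e^{-(t-s)L} ds‖ ≤ t^δ (1-μ)^{α-1}`. -/
theorem operator_integral_estimate_lemma512
    {H : Type*} [NormedAddCommGroup H] [InnerProductSpace ℂ H] [CompleteSpace H]
    (L : H →L[ℂ] H) (hLsa : IsSelfAdjoint L) (hLpos : ∀ x : H, 0 ≤ (inner ℂ (L x) x : ℂ).re)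
    (α μ δ : ℝ) (hα0 : 0 ≤ α) (hα1 : α ≤ 1) (hμ0 : 0 ≤ μ) (hμ1 : μ < 1) (hαμ : α + μ ≤ 1)
    (hδ : δ = 1 - α - μ) (t : ℝ) (ht : 0 < t) :
    ‖∫ s in Set.Ioo (0:ℝ) t, s ^ (-μ) • opPow L α (t - s)‖ ≤ t ^ δ * (1 - μ) ^ (α - 1) :=
  operator_integral_estimate_lemma512_general L hLsa hLpos α μ δ hα0 hμ0 hμ1 hαμ hδ t ht
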